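/- Let I = {1,…,κ} with κ ≥ 2, and for each i ∈ I let A_i ∈ ℝ^{2×2} be invertible with all entries strictly positive and ‖A_i‖ ≤ ᾱ < 1, and let a_i ∈ ℝ². Let E be the attractor of the affine IFS {x ↦ A_i x + a_i}, and set x_i = a_i + Σ_{n≥0} A_i A₁ⁿ a₁ and y_i = a_i + Σ_{n≥0} A_i A_κⁿ a_κ for i ∈ I. Write x ≺ y if both coordinates of y − x are strictly positive. If x_i ≺ x_{i+1} ≺ y_i ≺ y_{i+1} for every i ∈ {1,…,κ−1}, then for every vector e ∈ ℝ² with strictly positive coordinates, the set {x·e : x ∈ E} contains the interval {x·e : x ∈ [x₁, y_κ]}, which has length (y_κ − x₁)·e > 0. -/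

import Mathlib

/-! For a direction `e` with positive coordinates, the chain condition makes the intervals
`[⟪x i, e⟫, ⟪y i, e⟫]` cover `[⟪x₁, e⟫, ⟪y_κ, e⟫]`. Since `x i = fᵢ x₁`, `y i = fᵢ y_κ` and
`⟪fᵢ v, e⟫ = ⟪v, Aᵢᵀ e⟫ + ⟪aᵢ, e⟫`, a value in the `i`-th interval is, up to a shift, a value in
`[⟪x₁, e'⟫, ⟪y_κ, e'⟫]` for the new positive direction `e' = Aᵢᵀ e`, with `‖e'‖ ≤ ᾱ ‖e‖`.
Iterating `n` times approximates every value of the big interval by the projection of a point of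
`E` up to an error `O(ᾱⁿ)`, and the projection of the compact set `E` is closed. -/

open Set Matrix

noncomputable section

abbrev E2 := EuclideanSpace ℝ (Fin 2)

noncomputable def mLin (A : Matrix (Fin 2) (Fin 2) ℝ) : E2 →L[ℝ] E2 :=
  LinearMap.toContinuousLinearMap (Matrix.toEuclideanLin A)

/-- largest singular value = operator norm -/
noncomputable def a1 (A : Matrix (Fin 2) (Fin 2) ℝ) : ℝ := ‖mLin A‖

/-- `x ≺ y`: both coordinates of `y - x` are strictly positive -/
def posLt (x y : E2) : Prop := ∀ r : Fin 2, 0 < (y - x) r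

open scoped RealInnerProductSpace
open Filter Topology ContinuousLinearMap

section SelfSimilarProjection

variable {V ι : Type*} [NormedAddCommGroup V] [InnerProductSpace ℝ V] [CompleteSpace V]
  {L : ι → V →L[ℝ] V} {b : ι → V} {K E : Set V} {p q : V} {α : ℝ}

theorem exists_mem_abs_inner_sub_le_pow (hK : ∀ i, MapsTo (adjoint (L i)) K K)
    (hL : ∀ i, ‖L i‖ ≤ α)
    (hcover : ∀ e ∈ K, ∀ t ∈ Icc ⟪p, e⟫ ⟪q, e⟫, ∃ i, t ∈ Icc ⟪L i p + b i, e⟫ ⟪L i q + b i, e⟫)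
    (hE : ∀ i, MapsTo (fun v => L i v + b i) E E) {z : V} (hz : z ∈ E) (n : ℕ) :
    ∀ e ∈ K, ∀ t ∈ Icc ⟪p, e⟫ ⟪q, e⟫,
      ∃ v ∈ E, |⟪v, e⟫ - t| ≤ (‖z - p‖ + ‖q - p‖) * α ^ n * ‖e‖ := by
  induction n with
  | zero =>
    rintro e - t ⟨hpt, htq⟩
    refine ⟨z, hz, ?_⟩
    have hzp := abs_real_inner_le_norm (z - p) e
    have hqp := real_inner_le_norm (q - p) e
    rw [inner_sub_left, abs_le] at hzp
    rw [inner_sub_left] at hqp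
    rw [pow_zero, mul_one, add_mul, abs_le]
    have := mul_nonneg (norm_nonneg (z - p)) (norm_nonneg e)
    have := mul_nonneg (norm_nonneg (q - p)) (norm_nonneg e)
    constructor <;> linarith
  | succ n ih =>
    rintro e he t ht
    obtain ⟨i, hi⟩ := hcover e he t ht
    have hshift : ∀ v, ⟪L i v + b i, e⟫ = ⟪v, adjoint (L i) e⟫ + ⟪b i, e⟫ := fun v => by
      rw [inner_add_left, adjoint_inner_right]
    have ht' : t - ⟪b i, e⟫ ∈ Icc ⟪p, adjoint (L i) e⟫ ⟪q, adjoint (L i) e⟫ := by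
      rw [hshift, hshift] at hi
      constructor <;> linarith [hi.1, hi.2]
    obtain ⟨v, hv, hvt⟩ := ih _ (hK i he) _ ht'
    have hα : 0 ≤ α := (norm_nonneg _).trans (hL i)
    have hcontract : ‖adjoint (L i) e‖ ≤ α * ‖e‖ :=
      ((adjoint (L i)).le_opNorm e).trans <| by
        rw [LinearIsometryEquiv.norm_map]; gcongr; exact hL i
    refine ⟨L i v + b i, hE i hv, ?_⟩
    calc |⟪L i v + b i, e⟫ - t| = |⟪v, adjoint (L i) e⟫ - (t - ⟪b i, e⟫)| := by
          rw [hshift]; ring_nf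
      _ ≤ (‖z - p‖ + ‖q - p‖) * α ^ n * (α * ‖e‖) := hvt.trans (by gcongr)
      _ = (‖z - p‖ + ‖q - p‖) * α ^ (n + 1) * ‖e‖ := by ring

theorem Icc_inner_subset_image_inner (hα : α < 1) (hK : ∀ i, MapsTo (adjoint (L i)) K K)
    (hL : ∀ i, ‖L i‖ ≤ α)
    (hcover : ∀ e ∈ K, ∀ t ∈ Icc ⟪p, e⟫ ⟪q, e⟫, ∃ i, t ∈ Icc ⟪L i p + b i, e⟫ ⟪L i q + b i, e⟫)
    (hE : ∀ i, MapsTo (fun v => L i v + b i) E E) (hEc : IsCompact E) (hEne : E.Nonempty)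
    {e : V} (he : e ∈ K) :
    Icc ⟪p, e⟫ ⟪q, e⟫ ⊆ (fun v => ⟪v, e⟫) '' E := by
  obtain ⟨z, hz⟩ := hEne
  intro t ht
  have hα₀ : 0 ≤ α := by
    obtain ⟨i, -⟩ := hcover e he t ht
    exact (norm_nonneg _).trans (hL i)
  have hclosed : IsClosed ((fun v => ⟪v, e⟫) '' E) :=
    (hEc.image (continuous_id.inner continuous_const)).isClosed
  rw [← hclosed.closure_eq, Metric.mem_closure_iff]
  intro ε hε
  have hlim : Tendsto (fun n => (‖z - p‖ + ‖q - p‖) * α ^ n * ‖e‖) atTop (𝓝 0) := by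
    simpa using ((tendsto_pow_atTop_nhds_zero_of_lt_one hα₀ hα).const_mul _).mul_const ‖e‖
  obtain ⟨n, hn⟩ := (hlim.eventually (gt_mem_nhds hε)).exists
  obtain ⟨v, hv, hvt⟩ := exists_mem_abs_inner_sub_le_pow hK hL hcover hE hz n e he t ht
  exact ⟨_, ⟨v, hv, rfl⟩, by rw [Real.dist_eq, abs_sub_comm]; exact hvt.trans_lt hn⟩

end SelfSimilarProjection

theorem exists_mem_Icc_of_chain {α : Type*} [LinearOrder α] {κ : ℕ} (hκ : 0 < κ)
    {u w : Fin κ → α} (hchain : ∀ k (h : k + 1 < κ), u ⟨k + 1, h⟩ ≤ w ⟨k, Nat.lt_of_succ_lt h⟩)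
    {t : α} (ht : u ⟨0, hκ⟩ ≤ t) :
    ∀ m (hm : m < κ), t ≤ w ⟨m, hm⟩ → ∃ i, t ∈ Icc (u i) (w i) := by
  intro m
  induction m with
  | zero => exact fun hm htw => ⟨⟨0, hm⟩, ht, htw⟩
  | succ m ih =>
    intro hm htw
    by_cases hu : u ⟨m + 1, hm⟩ ≤ t
    · exact ⟨_, hu, htw⟩
    · exact ih (Nat.lt_of_succ_lt hm) ((not_le.mp hu).le.trans (hchain m hm))

theorem apply_zero_le_of_le_succ {α : Type*} [Preorder α] {κ : ℕ} {w : Fin κ → α}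
    (hw : ∀ k (h : k + 1 < κ), w ⟨k, Nat.lt_of_succ_lt h⟩ ≤ w ⟨k + 1, h⟩) :
    ∀ m (hm : m < κ), w ⟨0, Nat.zero_lt_of_lt hm⟩ ≤ w ⟨m, hm⟩ := by
  intro m
  induction m with
  | zero => exact fun _ => le_rfl
  | succ m ih => exact fun hm => (ih (Nat.lt_of_succ_lt hm)).trans (hw m hm)

section NeumannSeries

variable {W : Type*} [NormedAddCommGroup W] [NormedSpace ℝ W] [CompleteSpace W]
  {T : W →L[ℝ] W}

theorem summable_pow_apply (hT : ‖T‖ < 1) (b : W) : Summable fun n => (T ^ n) b :=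
  (apply ℝ W b).summable (summable_geometric_of_norm_lt_one hT)

theorem tsum_pow_apply_eq_apply_add (hT : ‖T‖ < 1) (b : W) :
    ∑' n, (T ^ n) b = T (∑' n, (T ^ n) b) + b := by
  have hs := summable_pow_apply hT b
  calc ∑' n, (T ^ n) b = ∑' n, T ((T ^ n) b) + b := by
        rw [hs.tsum_eq_zero_add, add_comm]
        simp only [pow_succ', mul_apply_eq_comp, pow_zero, one_apply_eq_self]
    _ = T (∑' n, (T ^ n) b) + b := by rw [T.map_tsum hs]

end NeumannSeries

theorem mLin_eq_toEuclideanCLM (A : Matrix (Fin 2) (Fin 2) ℝ) :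
    mLin A = toEuclideanCLM (n := Fin 2) (𝕜 := ℝ) A :=
  rfl

theorem adjoint_mLin (A : Matrix (Fin 2) (Fin 2) ℝ) : adjoint (mLin A) = mLin Aᵀ := by
  rw [← star_eq_adjoint, mLin_eq_toEuclideanCLM, mLin_eq_toEuclideanCLM, ← map_star,
    star_eq_conjTranspose, conjTranspose_eq_transpose_of_trivial]

theorem mLin_apply_pos {A : Matrix (Fin 2) (Fin 2) ℝ} (hA : ∀ r s, 0 < A r s) {e : E2}
    (he : ∀ r, 0 < e r) (r : Fin 2) : 0 < mLin A e r := by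
  rw [mLin_eq_toEuclideanCLM]
  show 0 < (A *ᵥ e.ofLp) r
  exact Finset.sum_pos (fun s _ => mul_pos (hA r s) (he s)) Finset.univ_nonempty

theorem inner_lt_inner_of_posLt {u v e : E2} (huv : posLt u v) (he : ∀ r, 0 < e r) :
    ⟪u, e⟫ < ⟪v, e⟫ := by
  have : 0 < ⟪v - u, e⟫ := by
    simp only [PiLp.inner_apply, RCLike.inner_apply, conj_trivial]
    exact Finset.sum_pos (fun r _ => mul_pos (he r) (huv r)) Finset.univ_nonempty
  rwa [inner_sub_left, sub_pos] at this

theorem eq_mLin_apply_add_of_eq_tsum {ι : Type*} {A : ι → Matrix (Fin 2) (Fin 2) ℝ}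
    {a : ι → E2} {j : ι} (hj : a1 (A j) < 1) {x : ι → E2}
    (hx : ∀ i, x i = a i + ∑' n, toEuclideanLin (A i * A j ^ n) (a j)) (i : ι) :
    x i = mLin (A i) (x j) + a i := by
  have hmap : ∀ k, ∑' n, toEuclideanLin (A k * A j ^ n) (a j) =
      mLin (A k) (∑' n, (mLin (A j) ^ n) (a j)) := fun k => by
    rw [(mLin (A k)).map_tsum (summable_pow_apply hj (a j))]
    refine tsum_congr fun n => ?_
    rw [mLin_eq_toEuclideanCLM, mLin_eq_toEuclideanCLM, ← map_pow, ← mul_apply_eq_comp, ← map_mul]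
    rfl
  have hxj : x j = ∑' n, (mLin (A j) ^ n) (a j) := by
    rw [hx j, hmap j, add_comm, ← tsum_pow_apply_eq_apply_add hj]
  rw [hx i, hmap i, ← hxj, add_comm]

/-- Lemma 5.5: order condition on the fixed-point images `x i = π(i 1^∞)`, `y i = π(i κ^∞)`
which guarantees that every projection of the attractor in a strictly positive direction `e`
contains the interval `[x₁, y_κ]·e`, of length `(y_κ − x₁)·e > 0`. -/
theorem order_projection_condition (κ : ℕ) (hκ : 2 ≤ κ)
    (A : Fin κ → Matrix (Fin 2) (Fin 2) ℝ) (a : Fin κ → E2)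
    (ᾱ : ℝ) (hᾱ : ᾱ < 1) (hnorm : ∀ i, a1 (A i) ≤ ᾱ)
    (hpos : ∀ i r s, 0 < A i r s)
    (E : Set E2) (hEne : E.Nonempty) (hEc : IsCompact E)
    (hattr : E = ⋃ i, (fun v => Matrix.toEuclideanLin (A i) v + a i) '' E)
    (x y : Fin κ → E2)
    (hx : ∀ i, x i = a i + ∑' n : ℕ,
      Matrix.toEuclideanLin (A i * (A ⟨0, by omega⟩) ^ n) (a ⟨0, by omega⟩))
    (hy : ∀ i, y i = a i + ∑' n : ℕ,
      Matrix.toEuclideanLin (A i * (A ⟨κ - 1, by omega⟩) ^ n) (a ⟨κ - 1, by omega⟩))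
    (hchain : ∀ k : ℕ, ∀ h : k + 1 < κ,
      posLt (x ⟨k, by omega⟩) (x ⟨k + 1, h⟩) ∧
      posLt (x ⟨k + 1, h⟩) (y ⟨k, by omega⟩) ∧
      posLt (y ⟨k, by omega⟩) (y ⟨k + 1, h⟩)) :
    ∀ e : E2, (∀ r : Fin 2, 0 < e r) →
      ((fun v => (inner ℝ v e : ℝ)) '' segment ℝ (x ⟨0, by omega⟩) (y ⟨κ - 1, by omega⟩) ⊆
        (fun v => (inner ℝ v e : ℝ)) '' E) ∧
      0 < (inner ℝ (y ⟨κ - 1, by omega⟩ - x ⟨0, by omega⟩) e : ℝ) := by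
  intro e he
  set i₀ : Fin κ := ⟨0, by omega⟩
  set iκ : Fin κ := ⟨κ - 1, by omega⟩
  have hxf := eq_mLin_apply_add_of_eq_tsum ((hnorm i₀).trans_lt hᾱ) hx
  have hyf := eq_mLin_apply_add_of_eq_tsum ((hnorm iκ).trans_lt hᾱ) hy
  have hlt : ⟪x i₀, e⟫ < ⟪y iκ, e⟫ :=
    calc ⟪x i₀, e⟫ < ⟪x ⟨1, hκ⟩, e⟫ := inner_lt_inner_of_posLt (hchain 0 hκ).1 he
      _ < ⟪y i₀, e⟫ := inner_lt_inner_of_posLt (hchain 0 hκ).2.1 he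
      _ ≤ ⟪y iκ, e⟫ := apply_zero_le_of_le_succ (w := fun i => ⟪y i, e⟫)
          (fun k h => (inner_lt_inner_of_posLt (hchain k h).2.2 he).le) _ _
  have hcover : ∀ e ∈ {e : E2 | ∀ r, 0 < e r}, ∀ t ∈ Icc ⟪x i₀, e⟫ ⟪y iκ, e⟫,
      ∃ i, t ∈ Icc ⟪mLin (A i) (x i₀) + a i, e⟫ ⟪mLin (A i) (y iκ) + a i, e⟫ := by
    rintro e he t ⟨hxt, hty⟩
    simp only [← hxf, ← hyf]
    exact exists_mem_Icc_of_chain (u := fun i => ⟪x i, e⟫) (w := fun i => ⟪y i, e⟫) _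
      (fun k h => (inner_lt_inner_of_posLt (hchain k h).2.1 he).le) hxt _ _ hty
  have hK : ∀ i, MapsTo (adjoint (mLin (A i))) {e | ∀ r, 0 < e r} {e | ∀ r, 0 < e r} :=
    fun i e he => by rw [adjoint_mLin]; exact mLin_apply_pos (fun r s => hpos i s r) he
  have hE : ∀ i, MapsTo (fun v => mLin (A i) v + a i) E E :=
    fun i v hv => by rw [hattr]; exact mem_iUnion_of_mem i ⟨v, hv, rfl⟩
  refine ⟨?_, by rwa [inner_sub_left, sub_pos]⟩
  calc (fun v => ⟪v, e⟫) '' segment ℝ (x i₀) (y iκ) = segment ℝ ⟪x i₀, e⟫ ⟪y iκ, e⟫ :=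
        image_segment ℝ (innerSLFlip ℝ e).toLinearMap.toAffineMap _ _
    _ = Icc ⟪x i₀, e⟫ ⟪y iκ, e⟫ := segment_eq_Icc hlt.le
    _ ⊆ _ := Icc_inner_subset_image_inner hᾱ hK hnorm hcover hE hEc hEne he

end
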